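/- Let L ≥ 1 be an integer and define G(ω) = Σ_{k=0}^{L} cos(π(k/L − 1/2)) e^{2πi k ω}. Then L·(2/π − 1/L) ≤ G(0) ≤ L·(2/π + 1/L). -/

import Mathlib

/-!
Since `cos (π (k/L - 1/2)) = sin (π k/L)`, `G(0) = ∑_{k=0}^{L} sin (π k/L)`; multiplying by
`2 sin x` with `x = π/(2L)` makes the sum telescope to `2 cos x`, so `G(0) = cot x`. The elementary
bounds `1/x - x/2 ≤ cot x ≤ 1/x` on `(0, π/2]` then give `2L/π - 1 ≤ G(0) ≤ 2L/π`.
-/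

open scoped Real
open Finset

/-- `G(ω) = Σ_{k=0}^{L} cos(π(k/L − 1/2)) e^{2πi k ω}`. -/
noncomputable def Gfun (L : ℕ) (ω : ℝ) : ℂ :=
  ∑ k ∈ Finset.range (L + 1),
    (Real.cos (Real.pi * ((k : ℝ) / L - 1 / 2)) : ℂ) *
      Complex.exp (2 * Real.pi * Complex.I * (k : ℂ) * (ω : ℂ))

namespace Real

lemma two_sin_mul_sum_range_sin_two_mul (x : ℝ) (n : ℕ) :
    2 * sin x * ∑ k ∈ range n, sin (2 * k * x) = cos x - cos ((2 * n - 1) * x) := by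
  induction n with
  | zero => simp [neg_mul, cos_neg]
  | succ n ih =>
    have hsub : (2 * n - 1) * x = 2 * n * x - x := by ring
    have hadd : (2 * (n + 1 : ℕ) - 1) * x = 2 * n * x + x := by push_cast; ring
    rw [sum_range_succ, mul_add, ih, hsub, hadd, cos_sub, cos_add]
    ring

lemma cot_le_inv {x : ℝ} (hx₀ : 0 < x) (hx : x < π) : cot x ≤ x⁻¹ := by
  have hsin : 0 < sin x := sin_pos_of_pos_of_lt_pi hx₀ hx
  rw [cot_eq_cos_div_sin, div_le_iff₀ hsin, ← div_eq_inv_mul, le_div_iff₀ hx₀]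
  rcases lt_or_ge x (π / 2) with hx' | hx'
  · have hcos : 0 < cos x := cos_pos_of_mem_Ioo ⟨by linarith, hx'⟩
    have := le_tan hx₀.le hx'
    rwa [tan_eq_sin_div_cos, le_div_iff₀ hcos, mul_comm] at this
  · have hcos : cos x ≤ 0 := cos_nonpos_of_pi_div_two_le_of_le hx' (by linarith)
    nlinarith

lemma inv_sub_half_le_cot {x : ℝ} (hx₀ : 0 < x) (hx : x ≤ π / 2) : x⁻¹ - x / 2 ≤ cot x := by
  have hsin : 0 < sin x := sin_pos_of_pos_of_lt_pi hx₀ (by linarith [pi_pos])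
  have hcos : 0 ≤ cos x := cos_nonneg_of_mem_Icc ⟨by linarith [pi_pos], hx⟩
  calc x⁻¹ - x / 2 = (1 - x ^ 2 / 2) / x := by field_simp
    _ ≤ cos x / x := by gcongr; exact one_sub_sq_div_two_le_cos
    _ ≤ cos x / sin x := div_le_div_of_nonneg_left hcos hsin (sin_le hx₀.le)
    _ = cot x := (cot_eq_cos_div_sin x).symm

end Real

open Real

lemma sum_range_sin_pi_mul_div_eq_cot {L : ℕ} (hL : L ≠ 0) :
    ∑ k ∈ range (L + 1), sin (π * k / L) = cot (π / (2 * L)) := by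
  have hL₀ : (0 : ℝ) < L := by positivity
  set x := π / (2 * L) with hx
  have hsin : sin x ≠ 0 := by
    refine (sin_pos_of_pos_of_lt_pi (by positivity) ?_).ne'
    rw [hx, div_lt_iff₀ (by positivity)]
    nlinarith [pi_pos, (show (1 : ℝ) ≤ L by exact_mod_cast Nat.one_le_iff_ne_zero.2 hL)]
  have key := two_sin_mul_sum_range_sin_two_mul x (L + 1)
  have hend : (2 * (L + 1 : ℕ) - 1) * x = x + π := by
    rw [hx]; push_cast; field_simp; ring
  have hterm (k : ℕ) : 2 * k * x = π * k / L := by rw [hx]; field_simp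
  simp only [hend, cos_add_pi, hterm] at key
  rw [cot_eq_cos_div_sin, eq_div_iff hsin]
  linarith

lemma Gfun_zero (L : ℕ) : Gfun L 0 = ((∑ k ∈ range (L + 1), sin (π * k / L) : ℝ) : ℂ) := by
  rw [Gfun, Complex.ofReal_sum]
  refine sum_congr rfl fun k _ => ?_
  rw [Complex.ofReal_zero, mul_zero, Complex.exp_zero, mul_one, mul_sub, mul_one_div,
    cos_sub_pi_div_two, mul_div_assoc]

theorem stmt6 (L : ℕ) (hL : 1 ≤ L) :
    (Gfun L 0).im = 0 ∧
    (L : ℝ) * (2 / Real.pi - 1 / L) ≤ (Gfun L 0).re ∧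
    (Gfun L 0).re ≤ (L : ℝ) * (2 / Real.pi + 1 / L) := by
  have hL₀ : (1 : ℝ) ≤ L := by exact_mod_cast hL
  set x := π / (2 * L) with hx
  have hx₀ : 0 < x := by positivity
  have hxπ : x ≤ π / 2 := div_le_div_of_nonneg_left pi_pos.le two_pos (by linarith)
  have hinv : x⁻¹ = 2 * L / π := by rw [hx, inv_div]
  have hscale (c : ℝ) : (L : ℝ) * (2 / π + c / L) = 2 * L / π + c := by field_simp
  rw [Gfun_zero, sum_range_sin_pi_mul_div_eq_cot (by omega), Complex.ofReal_im, Complex.ofReal_re]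
  refine ⟨rfl, ?_, ?_⟩
  · rw [sub_eq_add_neg, ← neg_div, hscale]
    linarith [inv_sub_half_le_cot hx₀ hxπ, pi_lt_four]
  · rw [hscale]
    linarith [cot_le_inv hx₀ (hxπ.trans_lt (half_lt_self pi_pos))]
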